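/- Let M, L ∈ ℝ^{d×d} be symmetric matrices with L − M positive semidefinite, and suppose that every symmetric matrix Q ∈ ℝ^{d×d} with Q − M and L − Q both positive semidefinite is invertible. Then M + L is invertible, and every complex eigenvalue of the matrix (M + L)⁻¹(L − M) is a real number lying in the open interval (−1, 1). -/

import Mathlib

/-!
For `|t| ≤ 1` the matrix `((1 + t) M + (1 - t) L) / 2` lies between `M` and `L`, so it is
invertible; `t = 0` gives `M + L`. An eigenvector `x` of `(M + L)⁻¹ (L - M)` for `μ` solves
`(L - M) x = μ (M + L) x`; since `x* (L - M) x ≥ 0` and `x* (M + L) x` is real, `μ` is real.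
If `|μ| ≥ 1`, then `x` is in the kernel of `(1 + t) M + (1 - t) L` with `t = μ⁻¹`, a contradiction.
-/

open Matrix ComplexOrder

variable {n : Type*}

namespace Matrix

lemma IsSymm.isHermitian_map_ofReal {A : Matrix n n ℝ} (hA : A.IsSymm) :
    (A.map Complex.ofReal).IsHermitian :=
  IsHermitian.map hA _ fun _ => by simp

lemma map_ofReal_smul_add_smul (M L : Matrix n n ℝ) (a b : ℝ) :
    (a • M + b • L).map Complex.ofReal
      = (a : ℂ) • M.map Complex.ofReal + (b : ℂ) • L.map Complex.ofReal := by
  ext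
  simp

variable [Fintype n]

lemma exists_mulVec_eq_smul_of_mem_spectrum {K : Type*} [Field K] [DecidableEq n]
    {A : Matrix n n K} {μ : K} (hμ : μ ∈ spectrum K A) : ∃ x ≠ 0, A *ᵥ x = μ • x := by
  rw [← spectrum_toLin', ← Module.End.hasEigenvalue_iff_mem_spectrum] at hμ
  obtain ⟨x, hx⟩ := hμ.exists_hasEigenvector
  exact ⟨x, hx.2, by simpa using Module.End.mem_eigenspace_iff.mp hx.1⟩

lemma PosSemidef.map_ofReal [DecidableEq n] {A : Matrix n n ℝ} (hA : A.PosSemidef) :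
    (A.map Complex.ofReal).PosSemidef := by
  open scoped MatrixOrder in
  obtain ⟨B, rfl⟩ := CStarAlgebra.nonneg_iff_eq_star_mul_self.mp hA.nonneg
  have : (star B * B).map Complex.ofReal = (B.map Complex.ofReal)ᴴ * B.map Complex.ofReal := by
    ext i j
    simp [mul_apply]
  rw [this]
  exact posSemidef_conjTranspose_mul_self _

lemma map_ofReal_mulVec_ne_zero [DecidableEq n] {A : Matrix n n ℝ} (hA : IsUnit A) {x : n → ℂ}
    (hx : x ≠ 0) : A.map Complex.ofReal *ᵥ x ≠ 0 := by
  have hAc : IsUnit (A.map Complex.ofReal) := hA.map Complex.ofRealHom.mapMatrix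
  exact fun h => hx (mulVec_injective_iff_isUnit.mpr hAc (h.trans (mulVec_zero _).symm))

lemma im_eq_zero_of_mulVec_eq_smul_mulVec {S D : Matrix n n ℂ} (hS : S.IsHermitian)
    (hD : D.PosSemidef) {x : n → ℂ} (hSx : S *ᵥ x ≠ 0) {μ : ℂ} (h : D *ᵥ x = μ • S *ᵥ x) :
    μ.im = 0 := by
  have hquad : star x ⬝ᵥ D *ᵥ x = μ * (star x ⬝ᵥ S *ᵥ x) := by
    rw [h, dotProduct_smul, smul_eq_mul]
  have hSim : (star x ⬝ᵥ S *ᵥ x).im = 0 := hS.im_star_dotProduct_mulVec_self x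
  have hDim : (star x ⬝ᵥ D *ᵥ x).im = 0 := (hD.dotProduct_mulVec_nonneg x).2.symm
  by_cases hc : star x ⬝ᵥ S *ᵥ x = 0
  · have hDx : D *ᵥ x = 0 := (hD.dotProduct_mulVec_zero_iff x).mp (by rw [hquad, hc, mul_zero])
    rw [hDx, eq_comm, smul_eq_zero] at h
    simp [h.resolve_right hSx]
  · have hre : (star x ⬝ᵥ S *ᵥ x).re ≠ 0 := fun hre => hc (Complex.ext hre hSim)
    rw [hquad, Complex.mul_im, hSim, mul_zero, zero_add] at hDim
    exact (mul_eq_zero.mp hDim).resolve_right hre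

lemma isUnit_smul_add_smul_of_abs_le_one [DecidableEq n] {M L : Matrix n n ℝ} (hM : M.IsSymm)
    (hL : L.IsSymm) (hLM : (L - M).PosSemidef)
    (h : ∀ Q : Matrix n n ℝ, Q.IsSymm → (Q - M).PosSemidef → (L - Q).PosSemidef → IsUnit Q)
    {t : ℝ} (ht : |t| ≤ 1) : IsUnit ((1 + t) • M + (1 - t) • L) := by
  obtain ⟨ht₁, ht₂⟩ := abs_le.mp ht
  set Q : Matrix n n ℝ := (2 : ℝ)⁻¹ • ((1 + t) • M + (1 - t) • L)
  have hQM : Q - M = ((1 - t) / 2) • (L - M) := by module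
  have hLQ : L - Q = ((1 + t) / 2) • (L - M) := by module
  have hQ : IsUnit Q := h Q (((hM.smul _).add (hL.smul _)).smul _)
    (hQM ▸ hLM.smul (by linarith)) (hLQ ▸ hLM.smul (by linarith))
  have hQ2 : (1 + t) • M + (1 - t) • L = (2 : ℝ) • Q := by module
  rw [hQ2, Algebra.smul_def]
  exact ((isUnit_iff_ne_zero.mpr two_ne_zero).map _).mul hQ

lemma map_ofReal_mulVec_eq_smul_mulVec_of_inv_mul [DecidableEq n] {S D : Matrix n n ℝ}
    (hS : IsUnit S) {x : n → ℂ} {μ : ℂ} (h : (S⁻¹ * D).map Complex.ofReal *ᵥ x = μ • x) :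
    D.map Complex.ofReal *ᵥ x = μ • S.map Complex.ofReal *ᵥ x := by
  have hD : D.map Complex.ofReal = S.map Complex.ofReal * (S⁻¹ * D).map Complex.ofReal := by
    calc D.map Complex.ofReal = (S * (S⁻¹ * D)).map Complex.ofReal := by
          rw [mul_nonsing_inv_cancel_left _ _ ((isUnit_iff_isUnit_det S).mp hS)]
      _ = _ := Matrix.map_mul (f := Complex.ofRealHom)
  rw [hD, ← mulVec_mulVec, h, mulVec_smul]

lemma map_ofReal_smul_add_smul_mulVec_eq_zero {M L : Matrix n n ℝ} {x : n → ℂ} {r : ℝ}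
    (hr : r ≠ 0) (h : (L - M).map Complex.ofReal *ᵥ x = (r : ℂ) • (M + L).map Complex.ofReal *ᵥ x) :
    ((1 + r⁻¹) • M + (1 - r⁻¹) • L).map Complex.ofReal *ᵥ x = 0 := by
  rw [show L - M = (-1 : ℝ) • M + (1 : ℝ) • L by module,
    show M + L = (1 : ℝ) • M + (1 : ℝ) • L by module] at h
  simp only [map_ofReal_smul_add_smul, add_mulVec, smul_mulVec] at h ⊢
  push_cast at h ⊢
  linear_combination (norm := match_scalars) (-(r : ℂ)⁻¹) • h
  all_goals field_simp; ring

end Matrix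

theorem stmt_4 {d : ℕ} (M L : Matrix (Fin d) (Fin d) ℝ)
    (hM : M.IsSymm) (hL : L.IsSymm) (hLM : (L - M).PosSemidef)
    (h : ∀ Q : Matrix (Fin d) (Fin d) ℝ, Q.IsSymm →
      (Q - M).PosSemidef → (L - Q).PosSemidef → IsUnit Q) :
    IsUnit (M + L) ∧
      ∀ μ ∈ spectrum ℂ (((M + L)⁻¹ * (L - M)).map (Complex.ofReal : ℝ → ℂ)),
        μ.im = 0 ∧ -1 < μ.re ∧ μ.re < 1 := by
  have hQ : ∀ t : ℝ, |t| ≤ 1 → IsUnit ((1 + t) • M + (1 - t) • L) :=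
    fun _ => isUnit_smul_add_smul_of_abs_le_one hM hL hLM h
  have hS : IsUnit (M + L) := by simpa using hQ 0 (by simp)
  refine ⟨hS, fun μ hμ => ?_⟩
  obtain ⟨x, hx, hμx⟩ := exists_mulVec_eq_smul_of_mem_spectrum hμ
  have hgen := map_ofReal_mulVec_eq_smul_mulVec_of_inv_mul hS hμx
  have hμ_im : μ.im = 0 := im_eq_zero_of_mulVec_eq_smul_mulVec (hM.add hL).isHermitian_map_ofReal
    hLM.map_ofReal (map_ofReal_mulVec_ne_zero hS hx) hgen
  refine ⟨hμ_im, ?_⟩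
  obtain ⟨r, rfl⟩ : ∃ r : ℝ, μ = r := ⟨μ.re, Complex.ext rfl (by simpa using hμ_im)⟩
  rw [Complex.ofReal_re, ← abs_lt]
  by_contra! hr
  have hr₀ : r ≠ 0 := by
    rintro rfl
    norm_num at hr
  exact map_ofReal_mulVec_ne_zero (hQ _ (by rw [abs_inv]; exact inv_le_one_of_one_le₀ hr)) hx
    (map_ofReal_smul_add_smul_mulVec_eq_zero hr₀ hgen)
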